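/- arXiv:math/0503078 — 2 statements merged into one kernel-verified Lean document; each statement's English description precedes it below -/
import Mathlib

section
/- Let I₀ be a finite interval in ℝ and let f₂, …, fₙ : I₀ → ℝ be locally Lipschitz, defining the curve C := {(x, f₂(x), …, fₙ(x)) : x ∈ I₀} (with f₁(x) = x). Let (R_C(Φ), β) be a system of resonant points near C that is locally ubiquitous with respect to a function ρ, and let Ψ be an approximating function such that Ψ(2^{t+1}) ≤ (1/2)·Ψ(2^t) for all sufficiently large t. If ∑_{t=1}^∞ Ψ(2^t)/ρ(2^t) = ∞, then the one-dimensional Lebesgue measure of Λ(R_C(Φ), β, Ψ) equals the length |I₀| of I₀. -/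
/-!
By the Lebesgue density theorem it suffices that, near each interior point `x` of `I₀`, the set
`Λ` of approximable points fills a fixed proportion of every small interval `I = [x - r, x + r]`.
There all `f k` are `K`-Lipschitz, so a point within `ψ t = Ψ (2 ^ t) / (K + 1)` of the first
coordinate of a resonant point `R α` with `β α ≤ 2 ^ t` is approximated by `R α`; since `ψ t → 0`,
a point that has this property for infinitely many `t`, and is not itself one of the countably
many first coordinates, lies in `Λ`.

Local ubiquity says that the `ρ (2 ^ t)`-balls around the first coordinates cover a proportion `κ`
of `I`. If `ρ (2 ^ t) ≤ ψ t` infinitely often this already suffices. Otherwise a Vitali subfamily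
gives about `|I| / ρ (2 ^ t)` centres with disjoint `ρ (2 ^ t)`-balls, and the `ψ t`-balls around
them form sets `E t` with `|E t| ≳ κ |I| w t`, `w t = ψ t / ρ (2 ^ t)`, and, for `s ≤ t`,
`|E s ∩ E t| ≲ |I| w s w t + |I| ψ t / ρ (2 ^ s)`; the halving condition makes the last term
summable in `t`. As `∑ w t = ∞`, the Chung–Erdős inequality
`(∑ |E t|)² ≤ |⋃ E t| ∑ ∑ |E s ∩ E t|` bounds `|limsup E t|` below by a multiple of `κ² |I|`.
-/

open MeasureTheory Filter Set Metric
open scoped ENNReal NNReal Topology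

theorem sq_sum_measure_le_measure_biUnion_mul {α ι : Type*} [MeasurableSpace α] (μ : Measure α)
    {E : ι → Set α} (hE : ∀ i, MeasurableSet (E i)) (F : Finset ι) :
    (∑ i ∈ F, μ (E i)) ^ 2 ≤ μ (⋃ i ∈ F, E i) * ∑ i ∈ F, ∑ j ∈ F, μ (E i ∩ E j) := by
  set U := ⋃ i ∈ F, E i
  set f : α → ℝ≥0∞ := fun x => ∑ i ∈ F, (E i).indicator 1 x
  have hU : MeasurableSet U := F.measurableSet_biUnion fun i _ => hE i
  have hf : Measurable f := Finset.measurable_sum _ fun i _ => measurable_one.indicator (hE i)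
  have hfU : f * U.indicator 1 = f := by
    funext x
    by_cases hx : x ∈ U
    · simp [hx]
    · have : f x = 0 := Finset.sum_eq_zero fun i hi =>
        indicator_of_notMem (fun h => hx (mem_biUnion hi h)) _
      simp [this]
  have hf_int : ∫⁻ x, f x ∂μ = ∑ i ∈ F, μ (E i) := by
    rw [lintegral_finsetSum _ fun i _ => measurable_one.indicator (hE i)]
    exact Finset.sum_congr rfl fun i _ => lintegral_indicator_one (hE i)
  have hf_sq : ∫⁻ x, f x ^ (2 : ℝ) ∂μ = ∑ i ∈ F, ∑ j ∈ F, μ (E i ∩ E j) := by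
    have hsq (x : α) : f x ^ (2 : ℝ) = ∑ i ∈ F, ∑ j ∈ F, (E i ∩ E j).indicator 1 x := by
      simp only [f, ENNReal.rpow_two, sq, Finset.sum_mul_sum, inter_indicator_one, Pi.mul_apply]
    simp_rw [hsq]
    rw [lintegral_finsetSum _ fun i _ => Finset.measurable_sum _ fun j _ =>
      measurable_one.indicator ((hE i).inter (hE j))]
    refine Finset.sum_congr rfl fun i _ => ?_
    rw [lintegral_finsetSum _ fun j _ => measurable_one.indicator ((hE i).inter (hE j))]
    exact Finset.sum_congr rfl fun j _ => lintegral_indicator_one ((hE i).inter (hE j))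
  have hU_sq : ∫⁻ x, U.indicator 1 x ^ (2 : ℝ) ∂μ = μ U := by
    have hsq (x : α) : U.indicator (1 : α → ℝ≥0∞) x ^ (2 : ℝ) = U.indicator 1 x := by
      by_cases hx : x ∈ U <;> simp [hx]
    simp_rw [hsq]
    exact lintegral_indicator_one hU
  have holder := ENNReal.lintegral_mul_le_Lp_mul_Lq μ Real.HolderConjugate.two_two
    hf.aemeasurable (measurable_one.indicator hU).aemeasurable
  rw [hfU, hf_int, hf_sq, hU_sq] at holder
  have hsqrt (a : ℝ≥0∞) : (a ^ (1 / 2 : ℝ)) ^ 2 = a := by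
    rw [← ENNReal.rpow_natCast, ← ENNReal.rpow_mul]
    norm_num
  calc (∑ i ∈ F, μ (E i)) ^ 2
      ≤ ((∑ i ∈ F, ∑ j ∈ F, μ (E i ∩ E j)) ^ (1 / 2 : ℝ) * μ U ^ (1 / 2 : ℝ)) ^ 2 := by
        gcongr
    _ = μ U * ∑ i ∈ F, ∑ j ∈ F, μ (E i ∩ E j) := by rw [mul_pow, hsqrt, hsqrt, mul_comm]

theorem sum_sum_le_two_mul_sum_sum_filter_le {ι : Type*} [LinearOrder ι] (F : Finset ι)
    {g : ι → ι → ℝ≥0∞} (hg : ∀ i j, g i j = g j i) :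
    ∑ i ∈ F, ∑ j ∈ F, g i j ≤ 2 * ∑ i ∈ F, ∑ j ∈ F with i ≤ j, g i j := by
  have hsplit (i j : ι) : g i j ≤ (if i ≤ j then g i j else 0) + if j ≤ i then g j i else 0 := by
    rcases le_total i j with h | h
    · simp [h]
    · simp [h, hg i j]
  calc ∑ i ∈ F, ∑ j ∈ F, g i j
      ≤ ∑ i ∈ F, ∑ j ∈ F, ((if i ≤ j then g i j else 0) + if j ≤ i then g j i else 0) := by
        gcongr with i _ j _; exact hsplit i j
    _ = 2 * ∑ i ∈ F, ∑ j ∈ F with i ≤ j, g i j := by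
        simp only [Finset.sum_add_distrib, Finset.sum_filter]
        rw [Finset.sum_comm (f := fun i j => if j ≤ i then g j i else 0), two_mul]

theorem sum_Ico_overlap_bound_le {ρ ψ : ℕ → ℝ} (hρ : ∀ t, 0 < ρ t) {L S : ℝ} (hL : 0 ≤ L)
    {s n : ℕ} (hψs : 0 ≤ ψ s) (hS : ∑ t ∈ Finset.Ico s n, ψ t / ρ t ≤ S)
    (htail : ∑ t ∈ Finset.Ico s n, ψ t ≤ 2 * ψ s) :
    ∑ t ∈ Finset.Ico s n, (2 * L * (ψ s / ρ s * (ψ t / ρ t)) + 4 * L * (ψ t / ρ s)) ≤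
      2 * L * S * (ψ s / ρ s) + 8 * L * (ψ s / ρ s) := by
  have hρs := hρ s
  calc ∑ t ∈ Finset.Ico s n, (2 * L * (ψ s / ρ s * (ψ t / ρ t)) + 4 * L * (ψ t / ρ s))
      = 2 * L * (ψ s / ρ s) * ∑ t ∈ Finset.Ico s n, ψ t / ρ t
          + 4 * L / ρ s * ∑ t ∈ Finset.Ico s n, ψ t := by
        rw [Finset.mul_sum, Finset.mul_sum, ← Finset.sum_add_distrib]
        exact Finset.sum_congr rfl fun t _ => by ring
    _ ≤ 2 * L * (ψ s / ρ s) * S + 4 * L / ρ s * (2 * ψ s) := by gcongr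
    _ = _ := by ring

theorem sum_sum_measure_inter_le {α : Type*} [MeasurableSpace α] (μ : Measure α)
    {E : ℕ → Set α} {ρ ψ : ℕ → ℝ} (hρ : ∀ t, 0 < ρ t) (hψ : ∀ t, 0 ≤ ψ t) {L : ℝ} (hL : 0 ≤ L)
    {m n : ℕ}
    (hpair : ∀ s ∈ Finset.Ico m n, ∀ t ∈ Finset.Ico s n,
      μ (E s ∩ E t) ≤ ENNReal.ofReal (2 * L * (ψ s / ρ s * (ψ t / ρ t)) + 4 * L * (ψ t / ρ s)))
    (htail : ∀ s ∈ Finset.Ico m n, ∑ t ∈ Finset.Ico s n, ψ t ≤ 2 * ψ s) :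
    ∑ s ∈ Finset.Ico m n, ∑ t ∈ Finset.Ico m n, μ (E s ∩ E t) ≤
      ENNReal.ofReal (4 * L * (∑ t ∈ Finset.Ico m n, ψ t / ρ t) ^ 2
        + 16 * L * ∑ t ∈ Finset.Ico m n, ψ t / ρ t) := by
  set F := Finset.Ico m n
  set S := ∑ t ∈ F, ψ t / ρ t with hSdef
  have hw (t : ℕ) : 0 ≤ ψ t / ρ t := div_nonneg (hψ t) (hρ t).le
  have hS : 0 ≤ S := Finset.sum_nonneg fun t _ => hw t
  have hrow : ∀ s ∈ F, ∑ t ∈ F with s ≤ t, μ (E s ∩ E t) ≤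
      ENNReal.ofReal (2 * L * S * (ψ s / ρ s) + 8 * L * (ψ s / ρ s)) := by
    intro s hs
    have hms := (Finset.mem_Ico.1 hs).1
    have hb (t : ℕ) : 0 ≤ 2 * L * (ψ s / ρ s * (ψ t / ρ t)) + 4 * L * (ψ t / ρ s) := by
      have := hw s; have := hw t; have := hψ t; have := hρ s
      positivity
    rw [Finset.Ico_filter_le, max_eq_right hms]
    refine (Finset.sum_le_sum (hpair s hs)).trans ?_
    rw [← ENNReal.ofReal_sum_of_nonneg fun t _ => hb t]
    exact ENNReal.ofReal_le_ofReal (sum_Ico_overlap_bound_le hρ hL (hψ s)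
      (Finset.sum_le_sum_of_subset_of_nonneg (Finset.Ico_subset_Ico hms le_rfl) fun t _ _ => hw t)
      (htail s hs))
  calc ∑ s ∈ F, ∑ t ∈ F, μ (E s ∩ E t)
      ≤ 2 * ∑ s ∈ F, ∑ t ∈ F with s ≤ t, μ (E s ∩ E t) :=
        sum_sum_le_two_mul_sum_sum_filter_le F fun s t => by rw [inter_comm]
    _ ≤ 2 * ∑ s ∈ F, ENNReal.ofReal (2 * L * S * (ψ s / ρ s) + 8 * L * (ψ s / ρ s)) := by
        gcongr with s hs; exact hrow s hs
    _ = ENNReal.ofReal (2 * ∑ s ∈ F, (2 * L * S * (ψ s / ρ s) + 8 * L * (ψ s / ρ s))) := by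
        rw [ENNReal.ofReal_mul zero_le_two, ENNReal.ofReal_ofNat,
          ENNReal.ofReal_sum_of_nonneg fun s _ => by have := hw s; positivity]
    _ = ENNReal.ofReal (4 * L * S ^ 2 + 16 * L * S) := by
        rw [Finset.sum_add_distrib, ← Finset.mul_sum, ← Finset.mul_sum, ← hSdef]
        ring_nf

theorem le_measure_biUnion_Ico_of_second_moment {α : Type*} [MeasurableSpace α] (μ : Measure α)
    {E : ℕ → Set α} (hE : ∀ t, MeasurableSet (E t)) {ρ ψ : ℕ → ℝ} (hρ : ∀ t, 0 < ρ t)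
    (hψ : ∀ t, 0 ≤ ψ t) {c L : ℝ} (hc : 0 ≤ c) (hL : 0 < L) {m n : ℕ}
    (hS : 4 ≤ ∑ t ∈ Finset.Ico m n, ψ t / ρ t)
    (hlow : ∀ t ∈ Finset.Ico m n, ENNReal.ofReal (c * (ψ t / ρ t)) ≤ μ (E t))
    (hpair : ∀ s ∈ Finset.Ico m n, ∀ t ∈ Finset.Ico s n,
      μ (E s ∩ E t) ≤ ENNReal.ofReal (2 * L * (ψ s / ρ s * (ψ t / ρ t)) + 4 * L * (ψ t / ρ s)))
    (htail : ∀ s ∈ Finset.Ico m n, ∑ t ∈ Finset.Ico s n, ψ t ≤ 2 * ψ s) :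
    ENNReal.ofReal (c ^ 2 / (8 * L)) ≤ μ (⋃ t ∈ Finset.Ico m n, E t) := by
  set F := Finset.Ico m n
  set S := ∑ t ∈ F, ψ t / ρ t
  have hS0 : 0 < S := by linarith
  have hnum : ENNReal.ofReal (c * S) ≤ ∑ t ∈ F, μ (E t) := by
    rw [Finset.mul_sum, ENNReal.ofReal_sum_of_nonneg fun t _ =>
      mul_nonneg hc (div_nonneg (hψ t) (hρ t).le)]
    exact Finset.sum_le_sum hlow
  have hden : ∑ s ∈ F, ∑ t ∈ F, μ (E s ∩ E t) ≤ ENNReal.ofReal (8 * L * S ^ 2) :=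
    (sum_sum_measure_inter_le μ hρ hψ hL.le hpair htail).trans
      (ENNReal.ofReal_le_ofReal (by nlinarith [mul_nonneg (mul_pos hL hS0).le (sub_nonneg.2 hS)]))
  have hden_pos : ENNReal.ofReal (8 * L * S ^ 2) ≠ 0 := by
    rw [ne_eq, ENNReal.ofReal_eq_zero, not_le]; positivity
  refine (ENNReal.mul_le_mul_iff_left hden_pos ENNReal.ofReal_ne_top).1 ?_
  calc ENNReal.ofReal (c ^ 2 / (8 * L)) * ENNReal.ofReal (8 * L * S ^ 2)
      = ENNReal.ofReal (c * S) ^ 2 := by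
        rw [← ENNReal.ofReal_mul (by positivity), ← ENNReal.ofReal_pow (by positivity)]
        congr 1; field_simp
    _ ≤ (∑ t ∈ F, μ (E t)) ^ 2 := by gcongr
    _ ≤ μ (⋃ t ∈ F, E t) * ∑ s ∈ F, ∑ t ∈ F, μ (E s ∩ E t) :=
        sq_sum_measure_le_measure_biUnion_mul μ hE F
    _ ≤ μ (⋃ t ∈ F, E t) * ENNReal.ofReal (8 * L * S ^ 2) := by gcongr

theorem le_measure_limsup_of_eventually_le {α : Type*} [MeasurableSpace α] {μ : Measure α}
    {E : ℕ → Set α} (hE : ∀ t, MeasurableSet (E t)) (hfin : μ (⋃ t, E t) ≠ ∞) {v : ℝ≥0∞}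
    (hv : ∀ᶠ m in atTop, v ≤ μ (⋃ t ≥ m, E t)) : v ≤ μ (limsup E atTop) := by
  have hanti : Antitone fun m => ⋃ t ≥ m, E t := fun m m' hm =>
    biUnion_subset_biUnion_left fun t ht => le_trans hm ht
  have hlim := tendsto_measure_iInter_atTop
    (fun m => (MeasurableSet.biUnion (to_countable _) fun t _ => hE t).nullMeasurableSet) hanti
    ⟨0, ne_top_of_le_ne_top hfin (measure_mono (iUnion₂_subset fun t _ => subset_iUnion E t))⟩
  rw [limsup_eq_iInf_iSup_of_nat]
  exact ge_of_tendsto hlim hv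

theorem measure_eq_zero_of_forall_eventually_exists_disjoint {X : Type*} [MetricSpace X]
    [ProperSpace X] [MeasurableSpace X] [BorelSpace X] [HasBesicovitchCovering X]
    (μ : Measure X) [IsLocallyFiniteMeasure μ] {s : Set X}
    (h : ∀ x ∈ s, ∃ c : ℝ≥0∞, c ≠ 0 ∧ ∀ᶠ r in 𝓝[>] 0, ∃ M ⊆ closedBall x r,
      MeasurableSet M ∧ Disjoint M s ∧ c * μ (closedBall x r) ≤ μ M) :
    μ s = 0 := by
  suffices hs : ∀ x ∈ s,
      ¬Tendsto (fun r => μ (s ∩ closedBall x r) / μ (closedBall x r)) (𝓝[>] 0) (𝓝 1) by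
    rw [← Measure.restrict_apply_self]
    exact measure_mono_null hs (ae_iff.1 (Besicovitch.ae_tendsto_measure_inter_div μ s))
  intro x hx hlim
  obtain ⟨c, hc, hM⟩ := h x hx
  have hdens : ∀ᶠ r in 𝓝[>] 0, μ (s ∩ closedBall x r) / μ (closedBall x r) ≤ 1 - c := by
    filter_upwards [hM] with r ⟨M, hMB, hMm, hMs, hcM⟩
    have hB : μ (closedBall x r) ≠ ∞ := measure_closedBall_lt_top.ne
    calc μ (s ∩ closedBall x r) / μ (closedBall x r)
        ≤ (μ (closedBall x r) - μ M) / μ (closedBall x r) := by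
          gcongr
          rw [← measure_sdiff hMB hMm.nullMeasurableSet (ne_top_of_le_ne_top hB (measure_mono hMB))]
          exact measure_mono fun y hy => ⟨hy.2, fun hyM => hMs.ne_of_mem hyM hy.1 rfl⟩
      _ ≤ (1 - c) * μ (closedBall x r) / μ (closedBall x r) := by
          rw [ENNReal.sub_mul fun _ _ => hB, one_mul]
          gcongr
      _ ≤ 1 - c := ENNReal.div_le_of_le_mul le_rfl
  exact (ENNReal.sub_lt_self ENNReal.one_ne_top one_ne_zero hc).not_ge (le_of_tendsto hlim hdens)

section Halving

variable {ψ : ℕ → ℝ} {T : ℕ}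

theorem sum_Ico_le_two_mul_of_halving (hψ : ∀ t, 0 ≤ ψ t)
    (hhalf : ∀ t, T ≤ t → ψ (t + 1) ≤ ψ t / 2) {s : ℕ} (hs : T ≤ s) (n : ℕ) :
    ∑ t ∈ Finset.Ico s n, ψ t ≤ 2 * ψ s := by
  have key (k : ℕ) : ∑ i ∈ Finset.range k, ψ (s + i) + 2 * ψ (s + k) ≤ 2 * ψ s := by
    induction k with
    | zero => simp
    | succ k ih =>
      have := hhalf (s + k) (by omega)
      rw [Finset.sum_range_succ, ← add_assoc s k 1]
      linarith
  rcases le_total n s with h | h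
  · simpa [Finset.Ico_eq_empty_of_le h] using hψ s
  · rw [Finset.sum_Ico_eq_sum_range]
    linarith [key (n - s), hψ (s + (n - s))]

theorem tendsto_zero_of_halving (hψ : ∀ t, 0 ≤ ψ t)
    (hhalf : ∀ t, T ≤ t → ψ (t + 1) ≤ ψ t / 2) : Tendsto ψ atTop (𝓝 0) := by
  refine (summable_of_sum_range_le hψ (c := ∑ t ∈ Finset.range T, ψ t + 2 * ψ T)
    fun n => ?_).tendsto_atTop_zero
  calc ∑ t ∈ Finset.range n, ψ t ≤ ∑ t ∈ Finset.range (max n T), ψ t :=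
        Finset.sum_le_sum_of_subset_of_nonneg (Finset.range_subset_range.2 (le_max_left _ _))
          fun t _ _ => hψ t
    _ = ∑ t ∈ Finset.range T, ψ t + ∑ t ∈ Finset.Ico T (max n T), ψ t :=
        (Finset.sum_range_add_sum_Ico _ (le_max_right _ _)).symm
    _ ≤ ∑ t ∈ Finset.range T, ψ t + 2 * ψ T := by
        gcongr; exact sum_Ico_le_two_mul_of_halving hψ hhalf le_rfl _

end Halving

theorem exists_le_sum_Ico_of_not_summable {w : ℕ → ℝ} (hw : ∀ t, 0 ≤ w t) (h : ¬Summable w)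
    (m : ℕ) (M : ℝ) : ∃ n, M ≤ ∑ t ∈ Finset.Ico m n, w t := by
  have hsum := (not_summable_iff_tendsto_nat_atTop_of_nonneg hw).1 h
  obtain ⟨n, hn, hmn⟩ := ((hsum.eventually_ge_atTop (M + ∑ t ∈ Finset.range m, w t)).and
    (eventually_ge_atTop m)).exists
  exact ⟨n, by rw [Finset.sum_Ico_eq_sub _ hmn]; linarith⟩

theorem card_mul_le_of_pairwiseDisjoint_closedBall {u : Finset ℝ} {r L : ℝ} (hL : 0 ≤ L)
    (hu : (u : Set ℝ).PairwiseDisjoint fun z => closedBall z r) {S : Set ℝ}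
    (hS : ∀ z ∈ u, closedBall z r ⊆ S) (hSL : volume S ≤ ENNReal.ofReal L) :
    u.card * (2 * r) ≤ L := by
  have h : ENNReal.ofReal (u.card * (2 * r)) ≤ ENNReal.ofReal L := by
    calc ENNReal.ofReal (u.card * (2 * r)) = ∑ z ∈ u, volume (closedBall z r) := by
          simp [Real.volume_closedBall, ENNReal.ofReal_mul]
      _ = volume (⋃ z ∈ u, closedBall z r) :=
          (measure_biUnion_finset hu fun _ _ => measurableSet_closedBall).symm
      _ ≤ ENNReal.ofReal L := (measure_mono (iUnion₂_subset hS)).trans hSL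
  exact (ENNReal.ofReal_le_ofReal_iff hL).1 h

theorem ofReal_le_volume_ball_inter_Icc {a b z r : ℝ} (hz : z ∈ Icc a b) (hr : 0 ≤ r)
    (hrab : r ≤ b - a) : ENNReal.ofReal r ≤ volume (ball z r ∩ Icc a b) := by
  have hsub : Ioo (max (z - r) a) (min (z + r) b) ⊆ ball z r ∩ Icc a b := by
    rw [Real.ball_eq_Ioo]
    rintro y ⟨h₁, h₂⟩
    simp only [max_lt_iff, lt_min_iff] at h₁ h₂
    exact ⟨⟨h₁.1, h₂.1⟩, h₁.2.le, h₂.2.le⟩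
  refine le_trans ?_ (measure_mono hsub)
  rw [Real.volume_Ioo]
  refine ENNReal.ofReal_le_ofReal ?_
  rw [le_sub_iff_add_le, ← max_add_add_left, max_le_iff, le_min_iff, le_min_iff]
  exact ⟨⟨by linarith, by linarith [hz.2]⟩, by linarith [hz.1], by linarith⟩

theorem volume_biUnion_ball_inter_Icc_le (S : Set ℝ) (a b : ℝ) {r : ℝ} (hr : 0 ≤ r) :
    volume (⋃ z ∈ S, ball z r ∩ Icc a b) ≤
      volume (⋃ z ∈ S ∩ Icc a b, ball z r ∩ Icc a b) + ENNReal.ofReal (2 * r) := by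
  -- a ball whose centre lies outside `[a, b]` meets `[a, b]` only within `r` of an endpoint
  have hsub : ⋃ z ∈ S, ball z r ∩ Icc a b ⊆
      (⋃ z ∈ S ∩ Icc a b, ball z r ∩ Icc a b) ∪ (Ico a (a + r) ∪ Ioc (b - r) b) := by
    simp only [iUnion_subset_iff]
    rintro z hz y ⟨hy, hya, hyb⟩
    rw [Real.ball_eq_Ioo] at hy
    by_cases hza : z < a
    · exact Or.inr (Or.inl ⟨hya, by linarith [hy.2]⟩)
    by_cases hzb : b < z
    · exact Or.inr (Or.inr ⟨by linarith [hy.1], hyb⟩)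
    exact Or.inl (mem_biUnion ⟨hz, not_lt.1 hza, not_lt.1 hzb⟩
      ⟨Real.ball_eq_Ioo z r ▸ hy, hya, hyb⟩)
  calc _ ≤ _ := measure_mono hsub
    _ ≤ _ := measure_union_le _ _
    _ ≤ volume (⋃ z ∈ S ∩ Icc a b, ball z r ∩ Icc a b) +
          (volume (Ico a (a + r)) + volume (Ioc (b - r) b)) := by
        gcongr; exact measure_union_le _ _
    _ = _ := by
        rw [Real.volume_Ico, Real.volume_Ioc, ← ENNReal.ofReal_add (by linarith) (by linarith)]
        ring_nf

theorem volume_biUnion_ball_inter_biUnion_ball_le {u v : Finset ℝ} {r φ ψ : ℝ} (hr : 0 < r)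
    (hφ : 0 ≤ φ) (hψ : 0 ≤ ψ) (hv : (v : Set ℝ).PairwiseDisjoint fun z => closedBall z r) :
    volume ((⋃ y ∈ u, ball y φ) ∩ ⋃ z ∈ v, ball z ψ) ≤
      u.card * ENNReal.ofReal ((φ + ψ + r) / r * (2 * ψ)) := by
  classical
  -- the centres `z ∈ v` whose balls meet `ball y φ` lie within `φ + ψ` of `y`, so their disjoint
  -- `r`-balls pack into `closedBall y (φ + ψ + r)`
  have hnear (y : ℝ) : volume (ball y φ ∩ ⋃ z ∈ v, ball z ψ) ≤
      ENNReal.ofReal ((φ + ψ + r) / r * (2 * ψ)) := by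
    set W := v.filter fun z => dist z y < φ + ψ
    have hW : W.card * (2 * r) ≤ 2 * (φ + ψ + r) := by
      refine card_mul_le_of_pairwiseDisjoint_closedBall (by positivity)
        (hv.subset (Finset.coe_subset.2 (Finset.filter_subset _ _))) (S := closedBall y (φ + ψ + r))
        (fun z hz x hx => ?_) (Real.volume_closedBall _ _).le
      have := (Finset.mem_filter.1 hz).2
      rw [mem_closedBall] at hx ⊢
      linarith [dist_triangle x z y]
    have hsub : ball y φ ∩ ⋃ z ∈ v, ball z ψ ⊆ ⋃ z ∈ W, ball z ψ := by
      rintro x ⟨hxy, hx⟩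
      obtain ⟨z, hz, hxz⟩ := mem_iUnion₂.1 hx
      rw [mem_ball] at hxy hxz
      refine mem_iUnion₂.2 ⟨z, Finset.mem_filter.2 ⟨hz, ?_⟩, hxz⟩
      linarith [dist_triangle z x y, dist_comm x z]
    calc _ ≤ _ := measure_mono hsub
      _ ≤ ∑ z ∈ W, volume (ball z ψ) := measure_biUnion_finset_le _ _
      _ = ENNReal.ofReal (W.card * (2 * ψ)) := by
          simp [Real.volume_ball, ENNReal.ofReal_mul]
      _ ≤ _ := by
          gcongr
          rw [le_div_iff₀ hr]
          linarith
  calc _ = volume (⋃ y ∈ u, ball y φ ∩ ⋃ z ∈ v, ball z ψ) := by rw [iUnion₂_inter]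
    _ ≤ ∑ y ∈ u, volume (ball y φ ∩ ⋃ z ∈ v, ball z ψ) := measure_biUnion_finset_le _ _
    _ ≤ ∑ _y ∈ u, ENNReal.ofReal ((φ + ψ + r) / r * (2 * ψ)) := Finset.sum_le_sum fun y _ => hnear y
    _ = _ := by rw [Finset.sum_const, nsmul_eq_mul]

theorem ofReal_card_mul_le_volume_biUnion_ball_inter_Icc {u : Finset ℝ} {a b ρ ψ : ℝ}
    (hu : ↑u ⊆ Icc a b) (hsep : (u : Set ℝ).PairwiseDisjoint fun z => closedBall z ρ)
    (hψ : 0 ≤ ψ) (hψρ : ψ ≤ ρ) (hψab : ψ ≤ b - a) :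
    ENNReal.ofReal (u.card * ψ) ≤ volume (⋃ z ∈ u, ball z ψ ∩ Icc a b) := by
  rw [measure_biUnion_finset (hsep.mono fun z => inter_subset_left.trans
      (ball_subset_closedBall.trans (closedBall_subset_closedBall hψρ)))
    fun z _ => measurableSet_ball.inter measurableSet_Icc]
  calc ENNReal.ofReal (u.card * ψ) = ∑ _z ∈ u, ENNReal.ofReal ψ := by
        rw [Finset.sum_const, nsmul_eq_mul, ENNReal.ofReal_mul (Nat.cast_nonneg _),
          ENNReal.ofReal_natCast]
    _ ≤ _ := Finset.sum_le_sum fun z hz => ofReal_le_volume_ball_inter_Icc (hu hz) hψ hψab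

theorem volume_inter_le_of_separated {a b ρ₁ ρ₂ ψ₁ ψ₂ : ℝ} {u₁ u₂ : Finset ℝ}
    (hu₁ : ↑u₁ ⊆ Icc a b) (hsep₁ : (u₁ : Set ℝ).PairwiseDisjoint fun z => closedBall z ρ₁)
    (hsep₂ : (u₂ : Set ℝ).PairwiseDisjoint fun z => closedBall z ρ₂) (hρ₁ : 0 < ρ₁)
    (hρ₁ab : ρ₁ ≤ (b - a) / 2) (hρ₂ : 0 < ρ₂) (hψ₁ : 0 ≤ ψ₁) (hψ₂ : 0 ≤ ψ₂) (hψρ₂ : ψ₂ ≤ ρ₂) :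
    volume ((⋃ z ∈ u₁, ball z ψ₁ ∩ Icc a b) ∩ ⋃ z ∈ u₂, ball z ψ₂ ∩ Icc a b) ≤
      ENNReal.ofReal (2 * (b - a) * (ψ₁ / ρ₁ * (ψ₂ / ρ₂)) + 4 * (b - a) * (ψ₂ / ρ₁)) := by
  have hcard : u₁.card * (2 * ρ₁) ≤ 2 * (b - a) :=
    card_mul_le_of_pairwiseDisjoint_closedBall (by linarith) hsep₁
      (S := Icc (a - ρ₁) (b + ρ₁)) (fun z hz x hx => by
        have := hu₁ hz; rw [Real.closedBall_eq_Icc] at hx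
        exact ⟨by linarith [this.1, hx.1], by linarith [this.2, hx.2]⟩)
      (by rw [Real.volume_Icc]; exact ENNReal.ofReal_le_ofReal (by linarith))
  calc _ ≤ volume ((⋃ z ∈ u₁, ball z ψ₁) ∩ ⋃ z ∈ u₂, ball z ψ₂) :=
        measure_mono (inter_subset_inter (iUnion₂_mono fun _ _ => inter_subset_left)
          (iUnion₂_mono fun _ _ => inter_subset_left))
    _ ≤ u₁.card * ENNReal.ofReal ((ψ₁ + ψ₂ + ρ₂) / ρ₂ * (2 * ψ₂)) :=
        volume_biUnion_ball_inter_biUnion_ball_le hρ₂ hψ₁ hψ₂ hsep₂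
    _ = ENNReal.ofReal (u₁.card * ((ψ₁ + ψ₂ + ρ₂) / ρ₂ * (2 * ψ₂))) := by
        rw [ENNReal.ofReal_mul (Nat.cast_nonneg _), ENNReal.ofReal_natCast]
    _ ≤ _ := by
        refine ENNReal.ofReal_le_ofReal ?_
        have hab : 0 ≤ b - a := by linarith
        have h₁ : (u₁.card : ℝ) ≤ (b - a) / ρ₁ := by
          rw [le_div_iff₀ hρ₁]; linarith
        have h₂ : (ψ₁ + ψ₂ + ρ₂) / ρ₂ ≤ ψ₁ / ρ₂ + 2 := by
          rw [div_add' _ _ _ hρ₂.ne', div_le_div_iff_of_pos_right hρ₂]; linarith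
        calc (u₁.card : ℝ) * ((ψ₁ + ψ₂ + ρ₂) / ρ₂ * (2 * ψ₂))
            ≤ (b - a) / ρ₁ * ((ψ₁ / ρ₂ + 2) * (2 * ψ₂)) := by gcongr
          _ = _ := by field_simp; ring

theorem le_volume_limsup_of_separated {a b κ : ℝ} (hab : a < b) (hκ : 0 ≤ κ) {ρ ψ : ℕ → ℝ}
    (hρ : ∀ t, 0 < ρ t) (hρ0 : Tendsto ρ atTop (𝓝 0)) (hψ : ∀ t, 0 < ψ t) {T : ℕ}
    (hhalf : ∀ t, T ≤ t → ψ (t + 1) ≤ ψ t / 2) (hdiv : ¬Summable fun t => ψ t / ρ t)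
    {u : ℕ → Finset ℝ} (hu : ∀ t, ↑(u t) ⊆ Icc a b)
    (hsep : ∀ t, (u t : Set ℝ).PairwiseDisjoint fun z => closedBall z (ρ t))
    (hcard : ∀ᶠ t in atTop, κ * (b - a) ≤ 16 * ((u t).card * ρ t))
    (hψρ : ∀ᶠ t in atTop, ψ t ≤ ρ t) :
    ENNReal.ofReal (κ ^ 2 / 2048 * (b - a)) ≤
      volume (limsup (fun t => ⋃ z ∈ u t, ball z (ψ t) ∩ Icc a b) atTop) := by
  set L := b - a
  have hL : 0 < L := sub_pos.2 hab
  set E : ℕ → Set ℝ := fun t => ⋃ z ∈ u t, ball z (ψ t) ∩ Icc a b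
  have hE (t : ℕ) : MeasurableSet (E t) :=
    (u t).measurableSet_biUnion fun z _ => measurableSet_ball.inter measurableSet_Icc
  have hEfin : volume (⋃ t, E t) ≠ ∞ := ne_top_of_le_ne_top measure_Icc_lt_top.ne
    (measure_mono (iUnion_subset fun t => iUnion₂_subset fun z _ => inter_subset_right))
  have hgood : ∀ᶠ t in atTop, κ * L ≤ 16 * ((u t).card * ρ t) ∧ ψ t ≤ ρ t ∧ ψ t ≤ L ∧
      ρ t ≤ L / 2 ∧ T ≤ t :=
    hcard.and <| hψρ.and <|
      ((tendsto_zero_of_halving (fun t => (hψ t).le) hhalf).eventually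
        (eventually_le_nhds hL)).and <|
      (hρ0.eventually (eventually_le_nhds (half_pos hL))).and (eventually_ge_atTop T)
  obtain ⟨m₀, hm₀⟩ := eventually_atTop.1 hgood
  refine le_measure_limsup_of_eventually_le hE hEfin ?_
  filter_upwards [eventually_ge_atTop m₀] with m hm
  obtain ⟨n, hn⟩ := exists_le_sum_Ico_of_not_summable (fun t => (div_pos (hψ t) (hρ t)).le)
    hdiv m 4
  have hgood' (t : ℕ) (ht : t ∈ Finset.Ico m n) := hm₀ t (hm.trans (Finset.mem_Ico.1 ht).1)
  have hlow : ∀ t ∈ Finset.Ico m n, ENNReal.ofReal (κ * L / 16 * (ψ t / ρ t)) ≤ volume (E t) := by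
    intro t ht
    obtain ⟨hc, hψρ, hψL, -⟩ := hgood' t ht
    refine le_trans (ENNReal.ofReal_le_ofReal ?_)
      (ofReal_card_mul_le_volume_biUnion_ball_inter_Icc (hu t) (hsep t) (hψ t).le hψρ hψL)
    rw [div_mul_div_comm, div_le_iff₀ (mul_pos (by norm_num) (hρ t))]
    nlinarith [hψ t]
  have hpair : ∀ s ∈ Finset.Ico m n, ∀ t ∈ Finset.Ico s n, volume (E s ∩ E t) ≤
      ENNReal.ofReal (2 * L * (ψ s / ρ s * (ψ t / ρ t)) + 4 * L * (ψ t / ρ s)) := by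
    intro s hs t ht
    obtain ⟨-, -, -, hρs, -⟩ := hgood' s hs
    obtain ⟨-, hψρt, -⟩ := hgood' t (Finset.Ico_subset_Ico_left (Finset.mem_Ico.1 hs).1 ht)
    exact volume_inter_le_of_separated (hu s) (hsep s) (hsep t) (hρ s) hρs (hρ t) (hψ s).le
      (hψ t).le hψρt
  calc ENNReal.ofReal (κ ^ 2 / 2048 * L) = ENNReal.ofReal ((κ * L / 16) ^ 2 / (8 * L)) := by
        congr 1; field_simp; ring
    _ ≤ volume (⋃ t ∈ Finset.Ico m n, E t) :=
        le_measure_biUnion_Ico_of_second_moment volume hE hρ (fun t => (hψ t).le)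
          (by positivity) hL hn hlow hpair fun s hs => sum_Ico_le_two_mul_of_halving (fun t => (hψ t).le) hhalf
            (hgood' s hs).2.2.2.2 n
    _ ≤ volume (⋃ t ≥ m, E t) :=
        measure_mono (biUnion_subset_biUnion_left fun t ht => (Finset.mem_Ico.1 ht).1)

theorem exists_pairwiseDisjoint_subset_volume_le {C : Set ℝ} (hC : C.Finite) (r : ℝ) :
    ∃ u : Finset ℝ, ↑u ⊆ C ∧ (u : Set ℝ).PairwiseDisjoint (fun z => closedBall z r) ∧
      volume (⋃ z ∈ C, ball z r) ≤ ENNReal.ofReal (u.card * (8 * r)) := by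
  obtain ⟨u, hu, hsep, hcov⟩ := Vitali.exists_disjoint_subfamily_covering_enlargement_closedBall
    C (fun z => z) (fun _ => r) r (fun _ _ => le_rfl) 4 (by norm_num)
  have hufin : u.Finite := hC.subset hu
  refine ⟨hufin.toFinset, by simpa using hu, by simpa using hsep, ?_⟩
  have hcover : ⋃ z ∈ C, ball z r ⊆ ⋃ γ ∈ hufin.toFinset, closedBall γ (4 * r) := by
    refine iUnion₂_subset fun z hz => ?_
    obtain ⟨γ, hγ, hzγ⟩ := hcov z hz
    exact ball_subset_closedBall.trans (hzγ.trans (subset_biUnion_of_mem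
      (u := fun γ => closedBall γ (4 * r)) (by simpa using hγ)))
  calc _ ≤ _ := measure_mono hcover
    _ ≤ ∑ γ ∈ hufin.toFinset, volume (closedBall γ (4 * r)) := measure_biUnion_finset_le _ _
    _ = _ := by
        simp only [Real.volume_closedBall, Finset.sum_const, nsmul_eq_mul,
          ENNReal.ofReal_mul (Nat.cast_nonneg _), ENNReal.ofReal_natCast]
        ring_nf

theorem eventually_le_volume_biUnion_inter_Icc {S : ℕ → Set ℝ} {a b κ : ℝ} (hab : a < b)
    (hκ : 0 < κ) {ρ : ℕ → ℝ} (hρ : ∀ t, 0 ≤ ρ t) (hρ0 : Tendsto ρ atTop (𝓝 0))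
    (hubi : ENNReal.ofReal κ * volume (Icc a b) ≤
      liminf (fun t => volume (⋃ z ∈ S t, ball z (ρ t) ∩ Icc a b)) atTop) :
    ∀ᶠ t in atTop, ENNReal.ofReal (κ * (b - a) / 2) ≤
      volume (⋃ z ∈ S t ∩ Icc a b, ball z (ρ t) ∩ Icc a b) := by
  have hL : 0 < b - a := sub_pos.2 hab
  have hlt : ENNReal.ofReal (3 * κ * (b - a) / 4) <
      liminf (fun t => volume (⋃ z ∈ S t, ball z (ρ t) ∩ Icc a b)) atTop := by
    refine lt_of_lt_of_le ?_ hubi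
    rw [Real.volume_Icc, ← ENNReal.ofReal_mul hκ.le, ENNReal.ofReal_lt_ofReal_iff (by positivity)]
    linarith [mul_pos hκ hL]
  filter_upwards [eventually_lt_of_lt_liminf hlt,
    hρ0.eventually (eventually_le_nhds (show 0 < κ * (b - a) / 8 by positivity))] with t ht hρt
  have hρt0 := hρ t
  refine (ENNReal.add_le_add_iff_right ENNReal.ofReal_ne_top).1
    (le_trans ?_ (volume_biUnion_ball_inter_Icc_le (S t) a b hρt0))
  rw [← ENNReal.ofReal_add (by positivity) (by positivity)]
  exact (ENNReal.ofReal_le_ofReal (by linarith)).trans ht.le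

theorem le_volume_limsup_of_frequently_le {S : ℕ → Set ℝ} (hS : ∀ t, (S t).Finite) {a b : ℝ}
    {ρ ψ : ℕ → ℝ} (hfreq : ∃ᶠ t in atTop, ρ t ≤ ψ t) {v : ℝ≥0∞}
    (hv : ∀ᶠ t in atTop, v ≤ volume (⋃ z ∈ S t ∩ Icc a b, ball z (ρ t) ∩ Icc a b)) :
    v ≤ volume (limsup (fun t => ⋃ z ∈ S t ∩ Icc a b, ball z (ψ t) ∩ Icc a b) atTop) := by
  set E : ℕ → Set ℝ := fun t => ⋃ z ∈ S t ∩ Icc a b, ball z (ψ t) ∩ Icc a b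
  have hE (t : ℕ) : MeasurableSet (E t) :=
    MeasurableSet.biUnion ((hS t).inter_of_left _).countable
      fun z _ => measurableSet_ball.inter measurableSet_Icc
  have hEfin : volume (⋃ t, E t) ≠ ∞ := ne_top_of_le_ne_top measure_Icc_lt_top.ne
    (measure_mono (iUnion_subset fun t => iUnion₂_subset fun z _ => inter_subset_right))
  refine le_measure_limsup_of_eventually_le hE hEfin (Eventually.of_forall fun m => ?_)
  obtain ⟨t, htm, hρψ, ht⟩ := frequently_atTop.1 (hfreq.and_eventually hv) m
  calc v ≤ _ := ht
    _ ≤ volume (E t) :=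
        measure_mono (iUnion₂_mono fun z _ => inter_subset_inter_left _ (ball_subset_ball hρψ))
    _ ≤ _ := measure_mono (subset_biUnion_of_mem (u := E) htm)

theorem le_volume_limsup_of_le_liminf {S : ℕ → Set ℝ} (hS : ∀ t, (S t).Finite) {a b κ : ℝ}
    (hab : a < b) (hκ : 0 < κ) {ρ ψ : ℕ → ℝ} (hρ : ∀ t, 0 < ρ t) (hρ0 : Tendsto ρ atTop (𝓝 0))
    (hψ : ∀ t, 0 < ψ t) {T : ℕ} (hhalf : ∀ t, T ≤ t → ψ (t + 1) ≤ ψ t / 2)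
    (hdiv : ¬Summable fun t => ψ t / ρ t)
    (hubi : ENNReal.ofReal κ * volume (Icc a b) ≤
      liminf (fun t => volume (⋃ z ∈ S t, ball z (ρ t) ∩ Icc a b)) atTop) :
    ENNReal.ofReal (min (κ / 2) (κ ^ 2 / 2048) * (b - a)) ≤
      volume (limsup (fun t => ⋃ z ∈ S t ∩ Icc a b, ball z (ψ t) ∩ Icc a b) atTop) := by
  have hL : 0 < b - a := sub_pos.2 hab
  have hinner := eventually_le_volume_biUnion_inter_Icc hab hκ (fun t => (hρ t).le) hρ0 hubi
  by_cases hfreq : ∃ᶠ t in atTop, ρ t ≤ ψ t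
  · exact (ENNReal.ofReal_le_ofReal (by nlinarith [min_le_left (κ / 2) (κ ^ 2 / 2048)])).trans
      (le_volume_limsup_of_frequently_le hS hfreq hinner)
  choose u hu hsep hvol using fun t =>
    exists_pairwiseDisjoint_subset_volume_le ((hS t).inter_of_left (Icc a b)) (ρ t)
  have hcard : ∀ᶠ t in atTop, κ * (b - a) ≤ 16 * ((u t).card * ρ t) := by
    filter_upwards [hinner] with t ht
    have := (ENNReal.ofReal_le_ofReal_iff (by have := hρ t; positivity)).1 <|
      ht.trans ((measure_mono (iUnion₂_mono fun _ _ => inter_subset_left)).trans (hvol t))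
    linarith
  calc ENNReal.ofReal (min (κ / 2) (κ ^ 2 / 2048) * (b - a))
      ≤ ENNReal.ofReal (κ ^ 2 / 2048 * (b - a)) :=
        ENNReal.ofReal_le_ofReal (by nlinarith [min_le_right (κ / 2) (κ ^ 2 / 2048)])
    _ ≤ volume (limsup (fun t => ⋃ z ∈ u t, ball z (ψ t) ∩ Icc a b) atTop) :=
        le_volume_limsup_of_separated hab hκ.le hρ hρ0 hψ hhalf hdiv
          (fun t => (hu t).trans inter_subset_right) hsep hcard
          ((not_frequently.1 hfreq).mono fun t ht => (not_le.1 ht).le)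
    _ ≤ _ := measure_mono <| limsup_le_limsup <| Eventually.of_forall fun t =>
        iUnion₂_subset fun z hz => subset_biUnion_of_mem (u := fun z => ball z (ψ t) ∩ Icc a b)
          (hu t hz)

theorem exists_subset_Icc_frequently_abs_sub_lt {ι : Type*} [Countable ι] {c : ι → ℝ}
    {A : ℕ → Set ι} (hA : ∀ t, (A t).Finite) {a b κ : ℝ} (hab : a < b) (hκ : 0 < κ)
    {ρ ψ : ℕ → ℝ} (hρ : ∀ t, 0 < ρ t) (hρ0 : Tendsto ρ atTop (𝓝 0)) (hψ : ∀ t, 0 < ψ t) {T : ℕ}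
    (hhalf : ∀ t, T ≤ t → ψ (t + 1) ≤ ψ t / 2) (hdiv : ¬Summable fun t => ψ t / ρ t) {C : ℝ}
    (hC : 0 < C)
    (hubi : ENNReal.ofReal κ * volume (Icc a b) ≤
      liminf (fun t => volume (⋃ α ∈ A t, Ioo (c α - ρ t) (c α + ρ t) ∩ Icc a b)) atTop) :
    ∃ M ⊆ Icc a b, MeasurableSet M ∧
      ENNReal.ofReal (min (κ / 2) (κ ^ 2 / 2048) * (b - a)) ≤ volume M ∧
      ∀ y ∈ M, y ∉ range c ∧ ∃ᶠ t in atTop, ∃ α ∈ A t, c α ∈ Icc a b ∧ |y - c α| < ψ t / C := by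
  set E : ℕ → Set ℝ := fun t => ⋃ z ∈ c '' A t ∩ Icc a b, ball z (ψ t / C) ∩ Icc a b
  have hE (t : ℕ) : MeasurableSet (E t) :=
    MeasurableSet.biUnion (((hA t).image c).inter_of_left _).countable
      fun z _ => measurableSet_ball.inter measurableSet_Icc
  have hvol : ENNReal.ofReal (min (κ / 2) (κ ^ 2 / 2048) * (b - a)) ≤ volume (limsup E atTop) := by
    refine le_volume_limsup_of_le_liminf (fun t => (hA t).image c) hab hκ hρ hρ0
      (fun t => div_pos (hψ t) hC) (T := T) (fun t ht => ?_) ?_ ?_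
    · rw [div_right_comm (ψ t), div_le_div_iff_of_pos_right hC]
      exact hhalf t ht
    · simpa only [div_right_comm _ C, summable_div_const_iff hC.ne'] using hdiv
    · simpa only [Real.ball_eq_Ioo, biUnion_image] using hubi
  refine ⟨limsup E atTop \ range c, fun y hy => ?_, (MeasurableSet.measurableSet_limsup hE).diff
      (countable_range c).measurableSet, ?_, fun y hy => ⟨hy.2, ?_⟩⟩
  · obtain ⟨t, ht⟩ := (mem_limsup_iff_frequently_mem.1 hy.1).exists
    obtain ⟨z, -, hz⟩ := mem_iUnion₂.1 ht
    exact hz.2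
  · rwa [measure_sdiff_null ((countable_range c).measure_zero _)]
  · refine (mem_limsup_iff_frequently_mem.1 hy.1).mono fun t ht => ?_
    obtain ⟨z, ⟨⟨α, hα, rfl⟩, hαI⟩, hyα, -⟩ := mem_iUnion₂.1 ht
    exact ⟨α, hα, hαI, by rwa [mem_ball, Real.dist_eq] at hyα⟩

theorem exists_ball_lipschitzOnWith {ι X Y : Type*} [Finite ι] [PseudoMetricSpace X]
    [PseudoEMetricSpace Y] {f : ι → X → Y} {s : Set X} {x : X} (hx : x ∈ interior s)
    (hf : ∀ k, LocallyLipschitzOn s (f k)) :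
    ∃ δ > 0, ball x δ ⊆ s ∧ ∃ K : ℝ≥0, ∀ k, LipschitzOnWith K (f k) (ball x δ) := by
  choose K t ht hK using fun k => hf k (interior_subset hx)
  have hs : s ∈ 𝓝 x := mem_interior_iff_mem_nhds.1 hx
  obtain ⟨δ, hδ, hsub⟩ := Metric.mem_nhds_iff.1
    (inter_mem (iInter_mem.2 fun k => nhdsWithin_eq_nhds.2 hs ▸ ht k) hs)
  exact ⟨δ, hδ, fun y hy => (hsub hy).2, ⨆ k, K k, fun k => ((hK k).mono fun y hy =>
    mem_iInter.1 (hsub hy).1 k).weaken (le_ciSup (Finite.bddAbove_range K) k)⟩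

theorem infinite_setOf_of_frequently_abs_sub_lt {ι : Type*} {c : ι → ℝ} {y : ℝ}
    (hy : y ∉ range c) {ψ : ℕ → ℝ} (hψ : Tendsto ψ atTop (𝓝 0)) {p : ι → Prop}
    (h : ∃ᶠ t in atTop, ∃ α, p α ∧ |y - c α| < ψ t) : {α | p α}.Infinite := by
  intro hfin
  have hfar : ∀ᶠ t in atTop, ∀ α ∈ {α | p α}, ψ t < |y - c α| :=
    hfin.eventually_all.2 fun α _ => hψ.eventually
      (eventually_lt_nhds (abs_pos.2 (sub_ne_zero.2 fun h => hy ⟨α, h.symm⟩)))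
  obtain ⟨t, ⟨α, hα, hlt⟩, hfar⟩ := (h.and_eventually hfar).exists
  exact (hfar α hα).not_gt hlt

theorem abs_sub_lt_of_lipschitzOnWith {ι : Type*} {f : ι → ℝ → ℝ} {s : Set ℝ} {K : ℝ≥0}
    (hf : ∀ k, LipschitzOnWith K (f k) s) {y z : ℝ} (hy : y ∈ s) (hz : z ∈ s) {p : ι → ℝ}
    {φ ψ : ℝ} (hres : ∀ k, |f k z - p k| < φ) (hyz : |y - z| < ψ / (K + 1)) :
    |y - z| < ψ ∧ ∀ k, |f k y - p k| < ψ + φ := by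
  rw [lt_div_iff₀ (by positivity), mul_add_one] at hyz
  have hK : 0 ≤ (K : ℝ) * |y - z| := by positivity
  refine ⟨by linarith [abs_nonneg (y - z)], fun k => ?_⟩
  have hlip : |f k y - f k z| ≤ K * |y - z| := by
    simpa only [Real.dist_eq] using (hf k).dist_le_mul y hy z hz
  calc |f k y - p k| ≤ |f k y - f k z| + |f k z - p k| := abs_sub_le _ _ _
    _ < ψ + φ := by linarith [hres k, abs_nonneg (y - z)]

theorem measure_eq_zero_of_inter_interior_eq_zero {E : Type*} [NormedAddCommGroup E]
    [NormedSpace ℝ E] [MeasurableSpace E] [BorelSpace E] [FiniteDimensional ℝ E] (μ : Measure E)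
    [μ.IsAddHaarMeasure] {s I : Set E} (hI : Convex ℝ I) (hs : s ⊆ I)
    (h : μ (s ∩ interior I) = 0) : μ s = 0 :=
  measure_mono_null (fun y hy => (em (y ∈ interior I)).elim (fun hy' => Or.inl ⟨hy, hy'⟩)
      fun hy' => Or.inr ⟨subset_closure (hs hy), hy'⟩)
    (measure_union_null h (hI.addHaar_frontier μ))

theorem statement10_general
    (n : ℕ) (hn : 0 < n)
    (I₀ : Set ℝ) (hI₀ : I₀.OrdConnected)
    (f : Fin n → ℝ → ℝ)
    (hlip : ∀ k : Fin n, ∀ x ∈ I₀, ∃ t ∈ nhdsWithin x I₀,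
      ∃ K : NNReal, LipschitzOnWith K (f k) t)
    (J : Type) [Countable J]
    (R : J → Fin n → ℝ) (β : J → ℝ) (hβ : ∀ α, 0 < β α)
    (hJfin : ∀ t : ℕ, {α : J | β α ≤ 2 ^ t}.Finite)
    (Φ : ℝ → ℝ)
    (ρ : ℝ → ℝ) (hρpos : ∀ t : ℝ, 0 < t → 0 < ρ t)
    (hρ0 : Tendsto ρ atTop (nhds 0))
    -- local ubiquity of the system (R_C(Φ), β) with respect to ρ
    (hub : ∃ κ : ℝ, 0 < κ ∧ ∀ I : Set ℝ, I ⊆ I₀ → I.OrdConnected →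
      ENNReal.ofReal κ * volume I ≤
        liminf (fun t : ℕ =>
          volume (⋃ α ∈ {α : J | β α ≤ 2 ^ t ∧
              ∀ k : Fin n, |f k (R α ⟨0, hn⟩) - R α k| < Φ (β α)},
            Ioo (R α ⟨0, hn⟩ - ρ (2 ^ t)) (R α ⟨0, hn⟩ + ρ (2 ^ t)) ∩ I)) atTop)
    (Ψ : ℝ → ℝ) (hΨpos : ∀ t : ℝ, 0 < t → 0 < Ψ t)
    (hΨdec : ∀ s t : ℝ, 0 < s → s ≤ t → Ψ t ≤ Ψ s)
    (hΨhalf : ∃ T : ℕ, ∀ t : ℕ, T ≤ t → Ψ (2 ^ (t + 1)) ≤ Ψ (2 ^ t) / 2)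
    (hdiv : ¬ Summable fun t : ℕ => Ψ (2 ^ t) / ρ (2 ^ t)) :
    volume {x ∈ I₀ | {α : J |
        (∀ k : Fin n, |f k (R α ⟨0, hn⟩) - R α k| < Φ (β α)) ∧
        |x - R α ⟨0, hn⟩| < Ψ (β α) ∧
        ∀ k : Fin n, k ≠ ⟨0, hn⟩ → |f k x - R α k| < Ψ (β α) + Φ (β α)}.Infinite} =
      volume I₀ := by
  obtain ⟨κ, hκ, hub⟩ := hub
  obtain ⟨T, hhalf⟩ := hΨhalf
  set Λ : Set ℝ := {x | {α : J | (∀ k, |f k (R α ⟨0, hn⟩) - R α k| < Φ (β α)) ∧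
    |x - R α ⟨0, hn⟩| < Ψ (β α) ∧
    ∀ k, k ≠ ⟨0, hn⟩ → |f k x - R α k| < Ψ (β α) + Φ (β α)}.Infinite}
  have hΨ : ∀ t : ℕ, 0 < Ψ (2 ^ t) := fun t => hΨpos _ (by positivity)
  suffices h : volume (I₀ \ Λ ∩ interior I₀) = 0 by
    have := measure_sdiff_null (s := I₀) <| measure_eq_zero_of_inter_interior_eq_zero volume
      (convex_iff_ordConnected.2 hI₀) sdiff_subset h
    rwa [sdiff_sdiff_right_self] at this
  refine measure_eq_zero_of_forall_eventually_exists_disjoint volume fun x hx => ?_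
  obtain ⟨δ, hδ, hδI₀, K, hK⟩ := exists_ball_lipschitzOnWith hx.2 fun k y hy =>
    (hlip k y hy).elim fun t ⟨ht, K, hK⟩ => ⟨K, t, ht, hK⟩
  refine ⟨ENNReal.ofReal (min (κ / 2) (κ ^ 2 / 2048)),
    (ENNReal.ofReal_pos.2 (by positivity)).ne', ?_⟩
  filter_upwards [Ioo_mem_nhdsGT hδ] with r hr
  have hIcc : Icc (x - r) (x + r) ⊆ ball x δ :=
    Real.closedBall_eq_Icc ▸ closedBall_subset_ball hr.2
  obtain ⟨M, hMI, hM, hvol, hclose⟩ := exists_subset_Icc_frequently_abs_sub_lt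
    (fun t => (hJfin t).subset fun _ h => h.1) (by linarith [hr.1]) hκ
    (fun t => hρpos _ (by positivity)) (hρ0.comp (tendsto_pow_atTop_atTop_of_one_lt one_lt_two))
    hΨ hhalf hdiv (C := K + 1) (by positivity) (hub _ (hIcc.trans hδI₀) ordConnected_Icc)
  refine ⟨M, Real.closedBall_eq_Icc ▸ hMI, hM, disjoint_left.2 fun y hyM hy => hy.1.2 ?_, ?_⟩
  · obtain ⟨hyc, hfreq⟩ := hclose y hyM
    refine infinite_setOf_of_frequently_abs_sub_lt hyc (by simpa using
      (tendsto_zero_of_halving (fun t => (hΨ t).le) hhalf).div_const ((K : ℝ) + 1)) (hfreq.mono ?_)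
    rintro t ⟨α, ⟨hβt, hres⟩, hαI, hyα⟩
    obtain ⟨hyα', hfy⟩ := abs_sub_lt_of_lipschitzOnWith hK (hIcc (hMI hyM)) (hIcc hαI) hres hyα
    have := hΨdec _ _ (hβ α) hβt
    exact ⟨α, ⟨hres, by linarith, fun k _ => by linarith [hfy k]⟩, hyα⟩
  · rw [Real.volume_closedBall, ← ENNReal.ofReal_mul (by positivity)]
    convert hvol using 2
    ring

theorem statement10
    (n : ℕ) (hn : 0 < n)
    (I₀ : Set ℝ) (hI₀ : I₀.OrdConnected) (hI₀bdd : Bornology.IsBounded I₀)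
    (f : Fin n → ℝ → ℝ) (hf₀ : ∀ x : ℝ, f ⟨0, hn⟩ x = x)
    (hlip : ∀ k : Fin n, ∀ x ∈ I₀, ∃ t ∈ nhdsWithin x I₀,
      ∃ K : NNReal, LipschitzOnWith K (f k) t)
    (J : Type) [Countable J]
    (R : J → Fin n → ℝ) (β : J → ℝ) (hβ : ∀ α, 0 < β α)
    (hJfin : ∀ t : ℕ, {α : J | β α ≤ 2 ^ t}.Finite)
    (Φ : ℝ → ℝ) (hΦpos : ∀ t : ℝ, 0 < t → 0 < Φ t)
    (hΦdec : ∀ s t : ℝ, 0 < s → s ≤ t → Φ t ≤ Φ s)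
    (ρ : ℝ → ℝ) (hρpos : ∀ t : ℝ, 0 < t → 0 < ρ t)
    (hρ0 : Tendsto ρ atTop (nhds 0))
    -- local ubiquity of the system (R_C(Φ), β) with respect to ρ
    (hub : ∃ κ : ℝ, 0 < κ ∧ ∀ I : Set ℝ, I ⊆ I₀ → I.OrdConnected →
      ENNReal.ofReal κ * volume I ≤
        liminf (fun t : ℕ =>
          volume (⋃ α ∈ {α : J | β α ≤ 2 ^ t ∧
              ∀ k : Fin n, |f k (R α ⟨0, hn⟩) - R α k| < Φ (β α)},
            Ioo (R α ⟨0, hn⟩ - ρ (2 ^ t)) (R α ⟨0, hn⟩ + ρ (2 ^ t)) ∩ I)) atTop)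
    (Ψ : ℝ → ℝ) (hΨpos : ∀ t : ℝ, 0 < t → 0 < Ψ t)
    (hΨdec : ∀ s t : ℝ, 0 < s → s ≤ t → Ψ t ≤ Ψ s)
    (hΨhalf : ∃ T : ℕ, ∀ t : ℕ, T ≤ t → Ψ (2 ^ (t + 1)) ≤ Ψ (2 ^ t) / 2)
    (hdiv : ¬ Summable fun t : ℕ => Ψ (2 ^ t) / ρ (2 ^ t)) :
    volume {x ∈ I₀ | {α : J |
        (∀ k : Fin n, |f k (R α ⟨0, hn⟩) - R α k| < Φ (β α)) ∧
        |x - R α ⟨0, hn⟩| < Ψ (β α) ∧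
        ∀ k : Fin n, k ≠ ⟨0, hn⟩ → |f k x - R α k| < Ψ (β α) + Φ (β α)}.Infinite} =
      volume I₀ :=
  statement10_general n hn I₀ hI₀ f hlip J R β hβ hJfin Φ ρ hρpos hρ0 hub Ψ hΨpos hΨdec hΨhalf hdiv
end

section
/- Let 0 < ε < 1/2 and let C₁^ε := {(x, y) ∈ ℝ² : x² + y² = 1, ε < x < 1 − ε, ε < y < 1 − ε} be the corresponding arc of the unit circle. Then there exists a constant K = K(ε) > 0 such that for all a, b ∈ ℝ and all δ₁, δ₂ > 0, the one-dimensional Hausdorff measure of C₁^ε ∩ ((a − δ₁, a + δ₁) × (b − δ₂, b + δ₂)) is at most K · min(δ₁, δ₂). -/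
/-!
On the arc, `y > ε` forces `1 - x ^ 2 = y ^ 2 > ε ^ 2`, so the arc is the graph of
`x ↦ √(1 - x ^ 2)` over a set where this function is `ε⁻¹`-Lipschitz. Hence its part in a
vertical strip of width `2δ` has `μH[1]`-measure at most `max 1 ε⁻¹ · 2δ`. The arc is symmetric
under `(x, y) ↦ (y, x)`, an isometry of `ℝ × ℝ`, which gives the same bound for horizontal
strips; a rectangle lies in both strips, so take the narrower one.
-/

open MeasureTheory Set
open scoped NNReal

def unitCircleArc (ε : ℝ) : Set (ℝ × ℝ) :=
  {p | p.1 ^ 2 + p.2 ^ 2 = 1 ∧ p.1 ∈ Ioo ε (1 - ε) ∧ p.2 ∈ Ioo ε (1 - ε)}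

lemma lipschitzOnWith_sqrt_one_sub_sq {c : ℝ≥0} (hc : 0 < c) :
    LipschitzOnWith c⁻¹ (fun x : ℝ => √(1 - x ^ 2)) {x | (c : ℝ) ^ 2 ≤ 1 - x ^ 2} := by
  refine lipschitzOnWith_iff_dist_le_mul.2 fun x hx y hy => ?_
  simp only [mem_ofPred_eq] at hx hy
  have hc' : (0 : ℝ) < c := hc
  set u := √(1 - x ^ 2)
  set v := √(1 - y ^ 2)
  have hu : (c : ℝ) ≤ u := Real.le_sqrt_of_sq_le hx
  have hv : (c : ℝ) ≤ v := Real.le_sqrt_of_sq_le hy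
  -- `u ^ 2 - v ^ 2 = y ^ 2 - x ^ 2`, where `u + v ≥ 2c` and `|x + y| ≤ 2`
  have hu2 : u ^ 2 = 1 - x ^ 2 := Real.sq_sqrt (by nlinarith)
  have hv2 : v ^ 2 = 1 - y ^ 2 := Real.sq_sqrt (by nlinarith)
  have hdiff : (u - v) * (u + v) = (y - x) * (y + x) := by linear_combination hu2 - hv2
  have hx1 : |x| ≤ 1 := (sq_le_one_iff_abs_le_one x).1 (by nlinarith)
  have hy1 : |y| ≤ 1 := (sq_le_one_iff_abs_le_one y).1 (by nlinarith)
  have hsum : |y + x| ≤ 2 := (abs_add_le y x).trans (by linarith)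
  have key : |u - v| * (2 * c) ≤ |x - y| * 2 :=
    calc |u - v| * (2 * c) ≤ |u - v| * (u + v) := by gcongr; linarith
      _ = |x - y| * |y + x| := by
        rw [← abs_of_pos (by linarith : 0 < u + v), ← abs_mul, hdiff, abs_mul, abs_sub_comm]
      _ ≤ |x - y| * 2 := by gcongr
  rw [Real.dist_eq, Real.dist_eq, NNReal.coe_inv, inv_mul_eq_div, le_div_iff₀ hc']
  linarith

lemma hausdorffMeasure_image_graph_le {g : ℝ → ℝ} {K : ℝ≥0} {s : Set ℝ}
    (hg : LipschitzOnWith K g s) :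
    μH[1] ((fun x => (x, g x)) '' s) ≤ max 1 K * volume s := by
  have hgraph := (LipschitzWith.id.lipschitzOnWith (s := s)).prodMk hg
  simpa [hausdorffMeasure_real] using hgraph.hausdorffMeasure_image_le zero_le_one

lemma preimage_swap_unitCircleArc (ε : ℝ) : Prod.swap ⁻¹' unitCircleArc ε = unitCircleArc ε := by
  ext p
  simp only [unitCircleArc, mem_preimage, mem_ofPred_eq, Prod.fst_swap, Prod.snd_swap]
  rw [add_comm]
  tauto

lemma unitCircleArc_inter_vertical_strip_subset {ε : ℝ} (hε : 0 < ε) (a δ : ℝ) :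
    unitCircleArc ε ∩ (Ioo (a - δ) (a + δ) ×ˢ univ) ⊆
      (fun x => (x, √(1 - x ^ 2))) '' (Ioo (a - δ) (a + δ) ∩ {x | ε ^ 2 ≤ 1 - x ^ 2}) := by
  rintro ⟨x, y⟩ ⟨⟨hcirc, -, hy, -⟩, hx, -⟩
  have hy2 : 1 - x ^ 2 = y ^ 2 := by linarith
  refine ⟨x, ⟨hx, ?_⟩, ?_⟩
  · rw [mem_ofPred_eq, hy2]
    nlinarith
  · change (x, √(1 - x ^ 2)) = (x, y)
    rw [hy2, Real.sqrt_sq (by linarith)]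

lemma hausdorffMeasure_unitCircleArc_inter_vertical_strip_le {ε : ℝ} (hε : 0 < ε) (a δ : ℝ) :
    μH[1] (unitCircleArc ε ∩ (Ioo (a - δ) (a + δ) ×ˢ univ)) ≤
      ENNReal.ofReal (2 * max 1 ε⁻¹ * δ) := by
  lift ε to ℝ≥0 using hε.le
  have hlip := (lipschitzOnWith_sqrt_one_sub_sq (NNReal.coe_pos.1 hε)).mono
    (inter_subset_right (s := Ioo (a - δ) (a + δ)))
  calc μH[1] (unitCircleArc ε ∩ (Ioo (a - δ) (a + δ) ×ˢ univ))
      ≤ μH[1] ((fun x => (x, √(1 - x ^ 2))) ''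
          (Ioo (a - δ) (a + δ) ∩ {x | (ε : ℝ) ^ 2 ≤ 1 - x ^ 2})) :=
        measure_mono (unitCircleArc_inter_vertical_strip_subset hε a δ)
    _ ≤ max 1 ε⁻¹ * volume (Ioo (a - δ) (a + δ)) :=
        (hausdorffMeasure_image_graph_le hlip).trans (by gcongr; exact inter_subset_left)
    _ = ENNReal.ofReal (2 * max 1 (ε : ℝ)⁻¹ * δ) := by
        rw [Real.volume_Ioo, ← ENNReal.ofReal_coe_nnreal, ← ENNReal.ofReal_mul (by positivity)]
        push_cast
        ring_nf

lemma hausdorffMeasure_unitCircleArc_inter_horizontal_strip_le {ε : ℝ} (hε : 0 < ε) (b δ : ℝ) :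
    μH[1] (unitCircleArc ε ∩ (univ ×ˢ Ioo (b - δ) (b + δ))) ≤
      ENNReal.ofReal (2 * max 1 ε⁻¹ * δ) := by
  have hswap : Isometry (Prod.swap : ℝ × ℝ → ℝ × ℝ) :=
    Isometry.of_dist_eq fun p q => by
      simp only [Prod.dist_eq, Prod.fst_swap, Prod.snd_swap, max_comm]
  rw [← hswap.hausdorffMeasure_image (Or.inl zero_le_one), image_swap_eq_preimage_swap,
    preimage_inter, preimage_swap_unitCircleArc, preimage_swap_prod]
  exact hausdorffMeasure_unitCircleArc_inter_vertical_strip_le hε b δ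

theorem statement17_general
    (ε : ℝ) (hε : 0 < ε) :
    ∃ K : ℝ, 0 < K ∧ ∀ a b δ₁ δ₂ : ℝ, 0 < δ₁ → 0 < δ₂ →
      μH[1] ({p : ℝ × ℝ | p.1 ^ 2 + p.2 ^ 2 = 1 ∧
          p.1 ∈ Ioo ε (1 - ε) ∧ p.2 ∈ Ioo ε (1 - ε)} ∩
        (Ioo (a - δ₁) (a + δ₁) ×ˢ Ioo (b - δ₂) (b + δ₂))) ≤
      ENNReal.ofReal (K * min δ₁ δ₂) := by
  refine ⟨2 * max 1 ε⁻¹, by positivity, fun a b δ₁ δ₂ _ _ => ?_⟩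
  change μH[1] (unitCircleArc ε ∩ _) ≤ _
  rcases le_total δ₁ δ₂ with h | h
  · rw [min_eq_left h]
    refine (measure_mono ?_).trans
      (hausdorffMeasure_unitCircleArc_inter_vertical_strip_le hε a δ₁)
    gcongr
    exact subset_univ _
  · rw [min_eq_right h]
    refine (measure_mono ?_).trans
      (hausdorffMeasure_unitCircleArc_inter_horizontal_strip_le hε b δ₂)
    gcongr
    exact subset_univ _

theorem statement17
    (ε : ℝ) (hε : 0 < ε) (hε2 : ε < 1 / 2) :
    ∃ K : ℝ, 0 < K ∧ ∀ a b δ₁ δ₂ : ℝ, 0 < δ₁ → 0 < δ₂ →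
      μH[1] ({p : ℝ × ℝ | p.1 ^ 2 + p.2 ^ 2 = 1 ∧
          p.1 ∈ Ioo ε (1 - ε) ∧ p.2 ∈ Ioo ε (1 - ε)} ∩
        (Ioo (a - δ₁) (a + δ₁) ×ˢ Ioo (b - δ₂) (b + δ₂))) ≤
      ENNReal.ofReal (K * min δ₁ δ₂) :=
  statement17_general ε hε
end
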